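/- arXiv:2302.10655 — 3 statements merged into one kernel-verified Lean document; each statement's English description precedes it below -/
import Mathlib

section
/- Define N* := E[r_θ̃(Z⁰)] and N̂ := (1/n₀)Σ_{i=1}^{n₀} r_θ̂(Zᵢ⁰). There exists a constant C_N, depending only on C₀, ‖f‖_∞ and ‖θ̃‖, such that for every δ ∈ (0, 1/2] with n_min := min{n₀, n₁} > C_N log(1/δ), with probability at least 1 − δ, |N* − N̂| ≤ √(C_N log(1/δ)/n_min). -/
/-!
Write `g z = exp ⟪θ̃, f z⟫ ∈ [0, M]` with `M = exp ((‖θ̃‖ + 1) b)`. The error `N* − N̂` splits into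
the sampling error `N* − (1/n₀) ∑ g (Zᵢ⁰)`, controlled by Hoeffding's inequality, and the
plug-in error `(1/n₀) ∑ (g (Zᵢ⁰) − exp ⟪θ̂, f (Zᵢ⁰)⟫)`. On the event
`‖θ̂ − θ̃‖ ≤ √(C₀ log (2/δ) / n_min) ≤ 1` all exponents stay below `(‖θ̃‖ + 1) b`, where `exp` is
`M`-Lipschitz, so the plug-in error is at most `M b ‖θ̂ − θ̃‖`. Spending `δ/2` on each event gives
the bound with `C_N = M² (3 + 4 b² C₀) + 2 C₀`.
-/

open MeasureTheory ProbabilityTheory Real Finset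
open scoped RealInnerProductSpace

theorem real_inner_le_mul_of_norm_le {E : Type*} [NormedAddCommGroup E] [InnerProductSpace ℝ E]
    {θ x : E} {R b : ℝ} (hθ : ‖θ‖ ≤ R) (hx : ‖x‖ ≤ b) : ⟪θ, x⟫ ≤ R * b :=
  (real_inner_le_norm θ x).trans (mul_le_mul hθ hx (norm_nonneg x) ((norm_nonneg θ).trans hθ))

theorem Real.abs_exp_sub_exp_le_of_le {x y c : ℝ} (hx : x ≤ c) (hy : y ≤ c) :
    |exp x - exp y| ≤ exp c * |x - y| := by
  wlog hyx : y ≤ x generalizing x y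
  · rw [abs_sub_comm, abs_sub_comm x]
    exact this hy hx (le_of_not_ge hyx)
  rw [abs_of_nonneg (sub_nonneg.2 (exp_le_exp.2 hyx)), abs_of_nonneg (sub_nonneg.2 hyx)]
  calc exp x - exp y = exp x * (1 - exp (y - x)) := by rw [mul_sub, ← exp_add]; ring_nf
    _ ≤ exp c * (x - y) :=
      mul_le_mul (exp_le_exp.2 hx) (by linarith [add_one_le_exp (y - x)])
        (sub_nonneg.2 (exp_le_one_iff.2 (by linarith))) (exp_pos c).le

theorem abs_exp_inner_sub_exp_inner_le {E : Type*} [NormedAddCommGroup E]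
    [InnerProductSpace ℝ E] {θ θ' x : E} {R b : ℝ} (hθ : ‖θ‖ ≤ R) (hθ' : ‖θ'‖ ≤ R)
    (hx : ‖x‖ ≤ b) :
    |exp ⟪θ, x⟫ - exp ⟪θ', x⟫| ≤ exp (R * b) * (b * ‖θ - θ'‖) := by
  calc |exp ⟪θ, x⟫ - exp ⟪θ', x⟫| ≤ exp (R * b) * |⟪θ - θ', x⟫| := by
        rw [inner_sub_left]
        exact abs_exp_sub_exp_le_of_le (real_inner_le_mul_of_norm_le hθ hx)
          (real_inner_le_mul_of_norm_le hθ' hx)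
    _ ≤ exp (R * b) * (b * ‖θ - θ'‖) := by
        gcongr
        rw [mul_comm]
        exact (abs_real_inner_le_norm _ _).trans (mul_le_mul_of_nonneg_left hx (norm_nonneg _))

theorem abs_mean_sub_mean_le {x y : ℕ → ℝ} {n : ℕ} {c : ℝ} (hc : 0 ≤ c)
    (h : ∀ i < n, |x i - y i| ≤ c) :
    |1 / (n : ℝ) * ∑ i ∈ range n, x i - 1 / (n : ℝ) * ∑ i ∈ range n, y i| ≤ c := by
  rcases n.eq_zero_or_pos with rfl | hn
  · simpa using hc
  rw [← mul_sub, ← sum_sub_distrib, abs_mul, abs_of_pos (by positivity), one_div,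
    inv_mul_le_iff₀ (by positivity)]
  calc |∑ i ∈ range n, (x i - y i)| ≤ ∑ i ∈ range n, |x i - y i| := abs_sum_le_sum_abs _ _
    _ ≤ n * c := by
      simpa using sum_le_card_nsmul (range n) _ c fun i hi => h i (mem_range.1 hi)

theorem Real.log_two_pow_div_le {δ : ℝ} (hδ : 0 < δ) (hδ2 : δ ≤ 1 / 2) (k : ℕ) :
    log (2 ^ k / δ) ≤ (k + 1) * log (1 / δ) := by
  have h2 : 2 ≤ 1 / δ := by rw [le_div_iff₀ hδ]; linarith
  calc log (2 ^ k / δ) ≤ log ((1 / δ) ^ (k + 1)) := by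
        rw [pow_succ, div_eq_mul_one_div]
        gcongr
    _ = (k + 1) * log (1 / δ) := by rw [log_pow]; push_cast; ring

theorem add_le_sqrt_of_sq_le {x y u v : ℝ} (hx : x ^ 2 ≤ u) (hy : y ^ 2 ≤ v) :
    x + y ≤ √(2 * (u + v)) :=
  le_sqrt_of_sq_le (by nlinarith [sq_nonneg (x - y)])

theorem ofReal_one_sub_add_le_measure {Ω : Type*} [MeasurableSpace Ω] {P : Measure Ω}
    [IsFiniteMeasure P] {A B S : Set Ω} {α β : ℝ} (hA : ENNReal.ofReal (1 - α) ≤ P A)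
    (hB : P.real B ≤ β) (hS : A \ B ⊆ S) : ENNReal.ofReal (1 - (α + β)) ≤ P S := by
  have hβ : 0 ≤ β := measureReal_nonneg.trans hB
  calc ENNReal.ofReal (1 - (α + β)) = ENNReal.ofReal (1 - α) - ENNReal.ofReal β := by
        rw [← ENNReal.ofReal_sub _ hβ, sub_add_eq_sub_sub]
    _ ≤ P A - P B := by
        gcongr
        rw [← ofReal_measureReal]; exact ENNReal.ofReal_le_ofReal hB
    _ ≤ P (A \ B) := le_measure_sdiff
    _ ≤ P S := measure_mono hS

section Hoeffding

variable {Ω : Type*} [MeasurableSpace Ω] {P : Measure Ω} [IsProbabilityMeasure P]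
  {X : ℕ → Ω → ℝ} {a b m : ℝ}

theorem measureReal_abs_sum_sub_ge_le (hind : iIndepFun X P) (hX : ∀ i, AEMeasurable (X i) P)
    (hab : ∀ i, ∀ᵐ ω ∂P, X i ω ∈ Set.Icc a b) (hm : ∀ i, P[X i] = m) (n : ℕ) {ε : ℝ}
    (hε : 0 ≤ ε) :
    P.real {ω | ε ≤ |∑ i ∈ range n, (X i ω - m)|}
      ≤ 2 * exp (-2 * ε ^ 2 / (n * (b - a) ^ 2)) := by
  set Y : ℕ → Ω → ℝ := fun i ω => X i ω - m
  have hY : ∀ i, HasSubgaussianMGF (Y i) ((‖b - a‖₊ / 2) ^ 2) P := fun i => by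
    simpa only [Y, hm] using hasSubgaussianMGF_of_mem_Icc (hX i) (hab i)
  have hYind : iIndepFun Y P := hind.comp (fun _ x => x - m) fun _ => measurable_sub_const m
  have htail : ∀ Z : ℕ → Ω → ℝ, iIndepFun Z P →
      (∀ i, HasSubgaussianMGF (Z i) ((‖b - a‖₊ / 2) ^ 2) P) →
      P.real {ω | ε ≤ ∑ i ∈ range n, Z i ω} ≤ exp (-2 * ε ^ 2 / (n * (b - a) ^ 2)) := by
    intro Z hZind hZ
    refine (HasSubgaussianMGF.measure_sum_range_ge_le_of_iIndepFun hZind (fun i _ => hZ i)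
      hε).trans_eq ?_
    push_cast
    rw [Real.norm_eq_abs, div_pow, sq_abs,
      show 2 * (n : ℝ) * ((b - a) ^ 2 / 2 ^ 2) = n * (b - a) ^ 2 / 2 by ring, div_div_eq_mul_div]
    ring_nf
  calc P.real {ω | ε ≤ |∑ i ∈ range n, Y i ω|}
      ≤ P.real ({ω | ε ≤ ∑ i ∈ range n, Y i ω} ∪ {ω | ε ≤ ∑ i ∈ range n, (-Y i) ω}) := by
        refine measureReal_mono (fun ω (hω : ε ≤ |_|) => ?_)
        simpa [sum_neg_distrib, le_neg] using Or.symm (le_abs'.1 hω)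
    _ ≤ _ := measureReal_union_le _ _
    _ ≤ 2 * exp (-2 * ε ^ 2 / (n * (b - a) ^ 2)) := by
        rw [two_mul]
        exact add_le_add (htail Y hYind hY) (htail (fun i => -Y i)
          (hYind.comp (fun _ => Neg.neg) fun _ => measurable_neg) fun i => (hY i).neg)

theorem measureReal_abs_mean_sub_ge_le (hind : iIndepFun X P) (hX : ∀ i, AEMeasurable (X i) P)
    (hab : ∀ i, ∀ᵐ ω ∂P, X i ω ∈ Set.Icc a b) (hm : ∀ i, P[X i] = m) {n : ℕ} (hn : 0 < n)
    {t : ℝ} (ht : 0 ≤ t) :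
    P.real {ω | t ≤ |1 / (n : ℝ) * ∑ i ∈ range n, X i ω - m|}
      ≤ 2 * exp (-2 * n * t ^ 2 / (b - a) ^ 2) := by
  have hn' : (0 : ℝ) < n := Nat.cast_pos.2 hn
  have hset : {ω | t ≤ |1 / (n : ℝ) * ∑ i ∈ range n, X i ω - m|}
      = {ω | n * t ≤ |∑ i ∈ range n, (X i ω - m)|} := by
    ext ω
    rw [Set.mem_ofPred_eq, Set.mem_ofPred_eq, sum_sub_distrib, sum_const, card_range, nsmul_eq_mul,
      ← mul_le_mul_iff_of_pos_left hn', ← abs_of_pos hn', ← abs_mul, abs_of_pos hn']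
    congr! 2
    field_simp
  rw [hset]
  convert measureReal_abs_sum_sub_ge_le hind hX hab hm n (mul_nonneg hn'.le ht) using 3
  field_simp

theorem measureReal_abs_mean_sub_ge_sqrt_log_le (hind : iIndepFun X P)
    (hX : ∀ i, AEMeasurable (X i) P) (hab : ∀ i, ∀ᵐ ω ∂P, X i ω ∈ Set.Icc a b)
    (hm : ∀ i, P[X i] = m) (hlt : a < b) {n : ℕ} (hn : 0 < n) {δ : ℝ} (hδ : 0 < δ)
    (hδ2 : δ ≤ 2) :
    P.real {ω | (b - a) * √(log (2 / δ) / (2 * n))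
        ≤ |1 / (n : ℝ) * ∑ i ∈ range n, X i ω - m|} ≤ δ := by
  have hlog : 0 ≤ log (2 / δ) := log_nonneg (by rw [le_div_iff₀ hδ]; linarith)
  refine (measureReal_abs_mean_sub_ge_le hind hX hab hm hn
    (mul_nonneg (sub_pos.2 hlt).le (sqrt_nonneg _))).trans_eq ?_
  have hn' : (0 : ℝ) < n := Nat.cast_pos.2 hn
  have hba : b - a ≠ 0 := (sub_pos.2 hlt).ne'
  have hexp : -2 * n * ((b - a) * √(log (2 / δ) / (2 * n))) ^ 2 / (b - a) ^ 2 = -log (2 / δ) := by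
    rw [mul_pow, sq_sqrt (by positivity)]
    field_simp
  rw [hexp, exp_neg, exp_log (by positivity)]
  field_simp

theorem measureReal_abs_mean_comp_sub_ge_le {𝒵 : Type*} [MeasurableSpace 𝒵] {Z : ℕ → Ω → 𝒵}
    {Z₀ : Ω → 𝒵} (hind : iIndepFun Z P) (hident : ∀ i, IdentDistrib (Z i) Z₀ P P)
    {g : 𝒵 → ℝ} (hg : Measurable g) (hab : ∀ z, g z ∈ Set.Icc a b) (hlt : a < b) {n : ℕ}
    (hn : 0 < n) {δ : ℝ} (hδ : 0 < δ) (hδ2 : δ ≤ 2) :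
    P.real {ω | (b - a) * √(log (2 / δ) / (2 * n))
        ≤ |1 / (n : ℝ) * ∑ i ∈ range n, g (Z i ω) - ∫ ω, g (Z₀ ω) ∂P|} ≤ δ :=
  measureReal_abs_mean_sub_ge_sqrt_log_le (X := fun i ω => g (Z i ω))
    (hind.comp (fun _ => g) fun _ => hg) (fun i => hg.comp_aemeasurable (hident i).aemeasurable_fst)
    (fun _ => ae_of_all _ fun _ => hab _) (fun i => ((hident i).comp hg).integral_eq) hlt hn hδ hδ2

end Hoeffding

theorem abs_sub_mean_exp_inner_le {E : Type*} [NormedAddCommGroup E] [InnerProductSpace ℝ E]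
    {x : ℕ → E} {n : ℕ} {θ θ' : E} {b μ r s : ℝ} (hx : ∀ i, ‖x i‖ ≤ b) (hθ : ‖θ' - θ‖ ≤ r)
    (hr : r ≤ 1) (hμ : |1 / (n : ℝ) * ∑ i ∈ range n, exp ⟪θ, x i⟫ - μ| < s) :
    |μ - 1 / (n : ℝ) * ∑ i ∈ range n, exp ⟪θ', x i⟫| ≤ s + exp ((‖θ‖ + 1) * b) * (b * r) := by
  have hb : 0 ≤ b := (norm_nonneg _).trans (hx 0)
  have hθ' : ‖θ'‖ ≤ ‖θ‖ + 1 := by linarith [norm_le_norm_add_norm_sub' θ' θ]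
  have hterm : ∀ i < n, |exp ⟪θ, x i⟫ - exp ⟪θ', x i⟫| ≤ exp ((‖θ‖ + 1) * b) * (b * r) :=
    fun i _ => (abs_exp_inner_sub_exp_inner_le (by linarith) hθ' (hx i)).trans (by
      rw [norm_sub_rev]; gcongr)
  calc _ = |(1 / (n : ℝ) * ∑ i ∈ range n, exp ⟪θ, x i⟫ - μ)
        - (1 / (n : ℝ) * ∑ i ∈ range n, exp ⟪θ, x i⟫
          - 1 / (n : ℝ) * ∑ i ∈ range n, exp ⟪θ', x i⟫)| := by
        rw [← abs_neg]; congr 1; ring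
    _ ≤ _ := abs_sub _ _
    _ ≤ s + exp ((‖θ‖ + 1) * b) * (b * r) :=
        add_le_add hμ.le (abs_mean_sub_mean_le
          (mul_nonneg (exp_pos _).le (mul_nonneg hb ((norm_nonneg _).trans hθ))) hterm)

theorem kliep_normalising_constant_bound_general
    {𝒵 : Type*} [MeasurableSpace 𝒵]
    {Ω : Type*} [MeasurableSpace Ω] (P : Measure Ω) [IsProbabilityMeasure P]
    {d : ℕ}
    (f : 𝒵 → EuclideanSpace ℝ (Fin d)) (hfmeas : Measurable f)
    (b : ℝ) (hfb : ∀ z, ‖f z‖ ≤ b)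
    (Z₀ : Ω → 𝒵)
    (Zs : Bool → ℕ → Ω → 𝒵)
    (hindep : iIndepFun (fun (q : Bool × ℕ) => Zs q.1 q.2) P)
    (hident₀ : ∀ i, IdentDistrib (Zs false i) Z₀ P P)
    (θt : EuclideanSpace ℝ (Fin d))
    (θh : ℕ → ℕ → Ω → EuclideanSpace ℝ (Fin d))
    -- `C₀` is the constant from the KLIEP finite-sample bound for `‖θ̂ − θ̃‖`
    (C₀ : ℝ) (hC₀one : 1 ≤ C₀)
    (hC₀ : ∀ δ : ℝ, δ ∈ Set.Ioc (0 : ℝ) (1 / 2) → ∀ n₀ n₁ : ℕ,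
      C₀ * Real.log (1 / δ) ≤ ((min n₀ n₁ : ℕ) : ℝ) →
      ENNReal.ofReal (1 - δ) ≤
        P {ω | ‖θh n₀ n₁ ω - θt‖
            ≤ Real.sqrt (C₀ * Real.log (1 / δ) / ((min n₀ n₁ : ℕ) : ℝ))}) :
    ∃ C_N : ℝ, ∀ δ : ℝ, δ ∈ Set.Ioc (0 : ℝ) (1 / 2) → ∀ n₀ n₁ : ℕ,
      C_N * Real.log (1 / δ) < ((min n₀ n₁ : ℕ) : ℝ) →
      ENNReal.ofReal (1 - δ) ≤
        P {ω | |(∫ ω', Real.exp ⟪θt, f (Z₀ ω')⟫ ∂P)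
              - (1 / (n₀ : ℝ)) * ∑ i ∈ Finset.range n₀,
                  Real.exp ⟪θh n₀ n₁ ω, f (Zs false i ω)⟫|
            ≤ Real.sqrt (C_N * Real.log (1 / δ) / ((min n₀ n₁ : ℕ) : ℝ))} := by
  set M := exp ((‖θt‖ + 1) * b)
  have hg : ∀ z, exp ⟪θt, f z⟫ ∈ Set.Icc 0 M := fun z =>
    ⟨(exp_pos _).le, exp_le_exp.2 (real_inner_le_mul_of_norm_le (by linarith) (hfb z))⟩
  set K := M ^ 2 * (3 + 4 * b ^ 2 * C₀)
  have hK : 0 ≤ K := by positivity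
  refine ⟨K + 2 * C₀, fun δ ⟨hδ, hδ2⟩ n₀ n₁ hnL => ?_⟩
  set n : ℝ := ((min n₀ n₁ : ℕ) : ℝ)
  set L := log (1 / δ)
  have hL : 0 ≤ L := log_nonneg (by rw [le_div_iff₀ hδ]; linarith)
  have hn : 0 < n := lt_of_le_of_lt (by positivity) hnL
  have hn₀ : n ≤ n₀ := Nat.cast_le.2 (min_le_left _ _)
  have hlog₀ : 0 ≤ log (1 / (δ / 2)) := log_nonneg ((one_le_div (half_pos hδ)).2 (by linarith))
  have hlog₁ : log (1 / (δ / 2)) ≤ 2 * L :=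
    (congrArg log (by ring)).trans_le ((log_two_pow_div_le hδ hδ2 1).trans_eq (by push_cast; ring))
  have hlog₂ : log (2 / (δ / 2)) ≤ 3 * L :=
    (congrArg log (by ring)).trans_le ((log_two_pow_div_le hδ hδ2 2).trans_eq (by push_cast; ring))
  have hC₀L : C₀ * log (1 / (δ / 2)) ≤ 2 * C₀ * L := by
    nlinarith [mul_le_mul_of_nonneg_left hlog₁ (zero_le_one.trans hC₀one)]
  have hC₀n : C₀ * log (1 / (δ / 2)) ≤ n := by nlinarith [mul_nonneg hK hL]
  have hA := hC₀ (δ / 2) ⟨by positivity, by linarith⟩ n₀ n₁ hC₀n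
  have hB := measureReal_abs_mean_comp_sub_ge_le
    (hindep.precomp (g := fun i => (false, i)) fun i j h => by simpa using h) hident₀
    (measurable_const.inner hfmeas).exp hg (exp_pos _) (Nat.cast_pos.1 (hn.trans_le hn₀))
    (half_pos hδ) (by linarith)
  refine (le_of_eq (by rw [add_halves])).trans (ofReal_one_sub_add_le_measure hA hB ?_)
  rintro ω ⟨hωA, hωB⟩
  refine (abs_sub_mean_exp_inner_le (fun i => hfb (Zs false i ω)) hωA
    (sqrt_le_one.2 ((div_le_one hn).2 hC₀n)) (not_le.1 hωB)).trans ?_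
  refine (add_le_sqrt_of_sq_le (u := M ^ 2 * (3 * L / (2 * n)))
    (v := (M * b) ^ 2 * (2 * C₀ * L / n)) ?_ ?_).trans (sqrt_le_sqrt ?_)
  · rw [sub_zero, mul_pow, sq_sqrt (div_nonneg (log_nonneg
      ((le_div_iff₀ (half_pos hδ)).2 (by linarith))) (by positivity))]
    gcongr
  · rw [← mul_assoc, mul_pow, sq_sqrt (div_nonneg (mul_nonneg (by linarith) hlog₀) hn.le)]
    gcongr
  · rw [le_div_iff₀ hn]
    field_simp
    nlinarith

/-- **Finite sample bound for the KLIEP normalising constant.**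
With `N* = E[r_θ̃(Z⁰)]` and `N̂ = (1/n₀) ∑ᵢ r_θ̂(Zᵢ⁰)`, there is a constant `C_N`
(depending only on `C₀`, `‖f‖_∞` and `‖θ̃‖`) such that for every `δ ∈ (0,1/2]` with
`n_min > C_N log(1/δ)`, with probability at least `1 − δ`,
`|N* − N̂| ≤ √(C_N log(1/δ)/n_min)`. -/
theorem kliep_normalising_constant_bound
    {𝒵 : Type*} [MeasurableSpace 𝒵]
    {Ω : Type*} [MeasurableSpace Ω] (P : Measure Ω) [IsProbabilityMeasure P]
    {d : ℕ}
    (f : 𝒵 → EuclideanSpace ℝ (Fin d)) (hfmeas : Measurable f)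
    (b : ℝ) (hfb : ∀ z, ‖f z‖ ≤ b)
    (Z₁ Z₀ : Ω → 𝒵) (hZ₁ : Measurable Z₁) (hZ₀ : Measurable Z₀)
    (Zs : Bool → ℕ → Ω → 𝒵)
    (hZsmeas : ∀ c i, Measurable (Zs c i))
    (hindep : iIndepFun (fun (q : Bool × ℕ) => Zs q.1 q.2) P)
    (hident₁ : ∀ i, IdentDistrib (Zs true i) Z₁ P P)
    (hident₀ : ∀ i, IdentDistrib (Zs false i) Z₀ P P)
    (σmin : ℝ) (hσpos : 0 < σmin)
    (hσmin : ∀ v : EuclideanSpace ℝ (Fin d),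
      σmin * ‖v‖ ^ 2 ≤ ∫ ω, (⟪v, f (Z₀ ω)⟫ - ∫ ω', ⟪v, f (Z₀ ω')⟫ ∂P) ^ 2 ∂P)
    -- `θ̃` minimises the population KLIEP loss
    (θt : EuclideanSpace ℝ (Fin d))
    (hθt : ∀ θ : EuclideanSpace ℝ (Fin d),
      (-∫ ω, ⟪θt, f (Z₁ ω)⟫ ∂P) + Real.log (∫ ω, Real.exp ⟪θt, f (Z₀ ω)⟫ ∂P)
        ≤ (-∫ ω, ⟪θ, f (Z₁ ω)⟫ ∂P) + Real.log (∫ ω, Real.exp ⟪θ, f (Z₀ ω)⟫ ∂P))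
    -- `θ̂ = θh n₀ n₁` minimises the empirical KLIEP loss
    (θh : ℕ → ℕ → Ω → EuclideanSpace ℝ (Fin d))
    (hθh : ∀ (n₀ n₁ : ℕ) (ω : Ω) (θ : EuclideanSpace ℝ (Fin d)),
      (-(1 / (n₁ : ℝ)) * ∑ i ∈ Finset.range n₁, ⟪θh n₀ n₁ ω, f (Zs true i ω)⟫)
          + Real.log ((1 / (n₀ : ℝ)) * ∑ i ∈ Finset.range n₀,
              Real.exp ⟪θh n₀ n₁ ω, f (Zs false i ω)⟫)
        ≤ (-(1 / (n₁ : ℝ)) * ∑ i ∈ Finset.range n₁, ⟪θ, f (Zs true i ω)⟫)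
          + Real.log ((1 / (n₀ : ℝ)) * ∑ i ∈ Finset.range n₀,
              Real.exp ⟪θ, f (Zs false i ω)⟫))
    -- `C₀` is the constant from the KLIEP finite-sample bound for `‖θ̂ − θ̃‖`
    (C₀ : ℝ) (hC₀one : 1 ≤ C₀)
    (hC₀ : ∀ δ : ℝ, δ ∈ Set.Ioc (0 : ℝ) (1 / 2) → ∀ n₀ n₁ : ℕ,
      C₀ * Real.log (1 / δ) ≤ ((min n₀ n₁ : ℕ) : ℝ) →
      ENNReal.ofReal (1 - δ) ≤
        P {ω | ‖θh n₀ n₁ ω - θt‖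
            ≤ Real.sqrt (C₀ * Real.log (1 / δ) / ((min n₀ n₁ : ℕ) : ℝ))}) :
    ∃ C_N : ℝ, ∀ δ : ℝ, δ ∈ Set.Ioc (0 : ℝ) (1 / 2) → ∀ n₀ n₁ : ℕ,
      C_N * Real.log (1 / δ) < ((min n₀ n₁ : ℕ) : ℝ) →
      ENNReal.ofReal (1 - δ) ≤
        P {ω | |(∫ ω', Real.exp ⟪θt, f (Z₀ ω')⟫ ∂P)
              - (1 / (n₀ : ℝ)) * ∑ i ∈ Finset.range n₀,
                  Real.exp ⟪θh n₀ n₁ ω, f (Zs false i ω)⟫|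
            ≤ Real.sqrt (C_N * Real.log (1 / δ) / ((min n₀ n₁ : ℕ) : ℝ))} :=
  kliep_normalising_constant_bound_general P f hfmeas b hfb Z₀ Zs hindep hident₀ θt θh C₀ hC₀one hC₀
end

section
/- For every ζ ∈ [0, 2], KL(f₀, f_ζ) ≤ ζ²/20, where KL(f₀, f_ζ) := ∫₀¹ f₀(y) log(f₀(y)/f_ζ(y)) dy. -/
open Real Finset intervalIntegral

/-- The density `f_ζ(y) = ζ e^{ζy}/(e^ζ − 1)` on `[0,1]` (for `ζ > 0`), with `f₀` the
uniform density on `[0,1]`. -/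
noncomputable def fdens (ζ y : ℝ) : ℝ :=
  if y ∈ Set.Icc (0 : ℝ) 1 then
    (if ζ = 0 then 1 else ζ * Real.exp (ζ * y) / (Real.exp ζ - 1))
  else 0

lemma sinh_poly_bound {x : ℝ} (h0 : 0 ≤ x) (h1 : x ≤ 1) :
    Real.exp x - Real.exp (-x) ≤ 2*x + 2*x^3/5 := by
  have hb1 := Real.exp_bound (n := 5) (by rw [abs_of_nonneg h0]; exact h1) (by norm_num)
  have hb2 := Real.exp_bound (x := -x) (n := 5) (by rw [abs_neg, abs_of_nonneg h0]; exact h1)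
    (by norm_num)
  rw [abs_of_nonneg h0] at hb1
  rw [abs_neg, abs_of_nonneg h0] at hb2
  simp only [Finset.sum_range_succ, Finset.sum_range_zero] at hb1 hb2
  norm_num [Nat.factorial] at hb1 hb2
  have e1 := (abs_sub_le_iff.1 hb1).1
  have e2 := (abs_sub_le_iff.1 hb2).2
  nlinarith [mul_nonneg (pow_nonneg h0 3) (by nlinarith : (0:ℝ) ≤ 1 - x^2),
    pow_nonneg h0 5, pow_nonneg h0 3]

lemma key_ineq {ζ : ℝ} (h0 : 0 < ζ) (h2 : ζ ≤ 2) :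
    Real.exp ζ - 1 ≤ ζ * Real.exp (ζ/2 + ζ^2/20) := by
  have hx0 : (0:ℝ) ≤ ζ/2 := by linarith
  have hx1 : ζ/2 ≤ 1 := by linarith
  have h := sinh_poly_bound hx0 hx1
  have hfac : Real.exp ζ - 1 = Real.exp (ζ/2) * (Real.exp (ζ/2) - Real.exp (-(ζ/2))) := by
    rw [mul_sub, ← Real.exp_add, ← Real.exp_add]
    norm_num
  rw [hfac, Real.exp_add, show ζ * (Real.exp (ζ/2) * Real.exp (ζ^2/20)) =
    Real.exp (ζ/2) * (ζ * Real.exp (ζ^2/20)) by ring]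
  apply mul_le_mul_of_nonneg_left _ (Real.exp_nonneg _)
  have hle : Real.exp (ζ/2) - Real.exp (-(ζ/2)) ≤ ζ + ζ^3/20 := by
    have := h; nlinarith
  refine hle.trans ?_
  have h3 : 1 + ζ^2/20 ≤ Real.exp (ζ^2/20) := by
    have := Real.add_one_le_exp (ζ^2/20); linarith
  nlinarith

/-- **KL bound for the exponential tilt family (Lemma A.10):**
for every `ζ ∈ [0,2]`, `KL(f₀, f_ζ) = ∫₀¹ f₀(y) log(f₀(y)/f_ζ(y)) dy ≤ ζ²/20`. -/
theorem kl_f0_fzeta_le (ζ : ℝ) (hζ : ζ ∈ Set.Icc (0 : ℝ) 2) :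
    (∫ y in (0 : ℝ)..1, fdens 0 y * Real.log (fdens 0 y / fdens ζ y)) ≤ ζ ^ 2 / 20 := by
  obtain ⟨h0, h2⟩ := hζ
  rcases eq_or_lt_of_le h0 with h0 | h0
  · have : ∀ y ∈ Set.uIcc (0:ℝ) 1,
        fdens 0 y * Real.log (fdens 0 y / fdens ζ y) = 0 := by
      intro y hy
      rw [Set.uIcc_of_le (by norm_num)] at hy
      rw [← h0]
      have hf : fdens 0 y = 1 := by simp [fdens, hy]
      rw [hf]
      norm_num
    rw [integral_congr this]
    simp
    positivity
  · have hexp : 0 < Real.exp ζ - 1 := by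
      have h1 : (1:ℝ) < Real.exp ζ := by
        rw [← Real.exp_zero]; exact Real.exp_lt_exp.2 h0
      linarith
    have hζne : ζ ≠ 0 := ne_of_gt h0
    have hcongr : ∀ y ∈ Set.uIcc (0:ℝ) 1,
        fdens 0 y * Real.log (fdens 0 y / fdens ζ y)
          = Real.log ((Real.exp ζ - 1)/ζ) - ζ * y := by
      intro y hy
      rw [Set.uIcc_of_le (by norm_num)] at hy
      have hf0 : fdens 0 y = 1 := by simp [fdens, hy]
      have hfz : fdens ζ y = ζ * Real.exp (ζ * y) / (Real.exp ζ - 1) := by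
        simp [fdens, hy, hζne]
      rw [hf0, hfz, one_mul, one_div, Real.log_inv, Real.log_div (by positivity) (ne_of_gt hexp),
        Real.log_mul hζne (Real.exp_ne_zero _), Real.log_exp,
        Real.log_div (ne_of_gt hexp) hζne]
      ring
    rw [integral_congr hcongr, integral_sub
      intervalIntegrable_const (intervalIntegrable_id.const_mul ζ)]
    rw [integral_const_mul, integral_id]
    simp only [integral_const, smul_eq_mul, mul_one]
    have hlog : Real.log ((Real.exp ζ - 1)/ζ) ≤ ζ/2 + ζ^2/20 := by
      rw [← Real.log_exp (ζ/2 + ζ^2/20)]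
      apply Real.log_le_log (by positivity)
      rw [div_le_iff₀ h0, mul_comm]
      exact key_ineq h0 h2
    nlinarith
end

section
/- For any ζ ∈ [0, 2], n₁ ∈ ℕ and w₁ ∈ [0, 1], KL( P̄_{n₀,n₁}(ζ, w₁, 0), P̄_{n₀,n₁}(ζ, w₁, 1) ) ≤ n₁ (1 − w₁) ζ²/20. -/
open MeasureTheory

instance {α : Type*} [MeasurableSpace α] : MeasurableSpace (Option α) :=
  MeasurableSpace.comap (Equiv.optionEquivSumPUnit.{0} α) inferInstance

/-- The Kullback–Leibler divergence `KL(μ, ν) = ∫ log(dμ/dν) dμ`. -/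
noncomputable def klDivR {α : Type*} [MeasurableSpace α] (μ ν : Measure α) : ℝ :=
  ∫ x, Real.log ((μ.rnDeriv ν x).toReal) ∂μ

/-- The box `A_d = [0, 1/√2] × [0, 1/√(2(d−1))]^{d−1}`. -/
noncomputable def Aset (d : ℕ) : Set (Fin d → ℝ) :=
  Set.univ.pi fun j : Fin d =>
    Set.Icc 0 (if (j : ℕ) = 0 then (Real.sqrt 2)⁻¹ else (Real.sqrt (2 * ((d : ℝ) - 1)))⁻¹)

/-- `P₀`: the uniform distribution on `A_d`. -/
noncomputable def Pzero (d : ℕ) : Measure (Fin d → ℝ) :=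
  (volume (Aset d))⁻¹ • volume.restrict (Aset d)

/-- The normalising constant `C_d = √(2^d (d−1)^{d−1})`. -/
noncomputable def Cd (d : ℕ) : ℝ := Real.sqrt (2 ^ d * ((d : ℝ) - 1) ^ (d - 1))

/-- The law of `Z¹`, with density `(z_j)_j ↦ C_d · f_{τζ}(√2 z₁)` on `A_d`. -/
noncomputable def Qone (d : ℕ) (hd : 0 < d) (ζ τ : ℝ) : Measure (Fin d → ℝ) :=
  (volume.restrict (Aset d)).withDensity fun z =>
    ENNReal.ofReal (Cd d * fdens (τ * ζ) (Real.sqrt 2 * z ⟨0, hd⟩))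

/-- `P₁(ζ, w₁, τ)`: the law on `𝒳 = A_d ∪ {∅}` of the corrupted observation `X¹`, which
equals `∅` with probability `w₁` independently of `Z¹`, and `Z¹` otherwise. -/
noncomputable def Pone (d : ℕ) (hd : 0 < d) (ζ w₁ τ : ℝ) :
    Measure (Option (Fin d → ℝ)) :=
  ENNReal.ofReal (1 - w₁) • ((Qone d hd ζ τ).map Option.some)
    + ENNReal.ofReal w₁ • Measure.dirac (none : Option (Fin d → ℝ))

/-- `P̄_{n₀,n₁}(ζ, w₁, τ) = P₀^{n₀} ⊗ P₁(ζ, w₁, τ)^{n₁}`: the joint law of the two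
samples `D'₀ ∼ P₀^{n₀}` (with `X⁰ = Z⁰`) and `D'₁ ∼ P₁(ζ, w₁, τ)^{n₁}`. -/
noncomputable def Pbar (d : ℕ) (hd : 0 < d) (n₀ n₁ : ℕ) (ζ w₁ τ : ℝ) :
    Measure ((Fin n₀ → Option (Fin d → ℝ)) × (Fin n₁ → Option (Fin d → ℝ))) :=
  (Measure.pi fun _ : Fin n₀ => (Pzero d).map Option.some).prod
    (Measure.pi fun _ : Fin n₁ => Pone d hd ζ w₁ τ)

open ProbabilityTheory InformationTheory Set
open scoped ENNReal

/-! The likelihood ratio of `P₁(ζ, w₁, 0)` to `P₁(ζ, w₁, 1)` is `1` at `∅` and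
`((e^ζ − 1)/ζ) e^{−ζy}` at an observed point, where `y = √2 z₁` is uniform on `[0,1]` when
`τ = 0`. Hence a single observation contributes `(1 − w₁)(log((e^ζ − 1)/ζ) − ζ/2)`, which is at
most `(1 − w₁) ζ²/20` for `ζ ≤ 2`. By the chain rule, Kullback–Leibler divergence adds up over
independent coordinates, and the common `P₀`-sample contributes nothing. -/

section Option

variable {α β : Type*} [MeasurableSpace α] [MeasurableSpace β]

lemma measurable_optionSome : Measurable (Option.some : α → Option α) := by
  rintro _ ⟨s, hs, rfl⟩
  exact measurable_inl hs

lemma Measurable.option_elim {f : α → β} (hf : Measurable f) (b : β) :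
    Measurable fun x : Option α => x.elim b f := by
  have : (fun x : Option α => x.elim b f)
      = Sum.elim f (fun _ => b) ∘ Equiv.optionEquivSumPUnit.{0} α := by
    funext x; cases x <;> rfl
  rw [this]
  exact (hf.sumElim measurable_const).comp (Measurable.of_comap_le le_rfl)

lemma withDensity_map_optionSome (Q : Measure α) {g : Option α → ℝ≥0∞} (hg : Measurable g) :
    (Q.map Option.some).withDensity g = (Q.withDensity (g ∘ Option.some)).map Option.some := by
  ext s hs
  rw [withDensity_apply _ hs, Measure.map_apply measurable_optionSome hs,
    withDensity_apply _ (measurable_optionSome hs),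
    setLIntegral_map hs hg measurable_optionSome]
  rfl

lemma withDensity_dirac {a : α} {g : α → ℝ≥0∞} (hg : Measurable g) :
    (Measure.dirac a).withDensity g = g a • Measure.dirac a := by
  ext s hs
  classical
  rw [withDensity_apply _ hs, setLIntegral_dirac' hg hs, Measure.smul_apply,
    Measure.dirac_apply' _ hs]
  by_cases h : a ∈ s <;> simp [h]

noncomputable def withMissing (Q : Measure α) (a b : ℝ≥0∞) : Measure (Option α) :=
  a • Q.map Option.some + b • Measure.dirac none

lemma withMissing_withDensity (Q : Measure α) {g : α → ℝ≥0∞} (hg : Measurable g)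
    (a b : ℝ≥0∞) :
    (withMissing Q a b).withDensity (fun x => x.elim 1 g) = withMissing (Q.withDensity g) a b := by
  have hg' : Measurable fun x : Option α => x.elim 1 g := hg.option_elim 1
  rw [withMissing, withMissing, withDensity_add_measure, withDensity_smul_measure,
    withDensity_smul_measure, withDensity_map_optionSome _ hg', withDensity_dirac hg',
    Option.elim_none, one_smul]
  rfl

lemma integrable_withMissing (Q : Measure α) {φ : Option α → ℝ} (hφ : Measurable φ)
    (h : Integrable (fun z => φ (some z)) Q) {a b : ℝ≥0∞} (ha : a ≠ ∞) (hb : b ≠ ∞) :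
    Integrable φ (withMissing Q a b) :=
  (((integrable_map_measure hφ.aestronglyMeasurable measurable_optionSome.aemeasurable).2
      h).smul_measure ha).add_measure
    ((integrable_dirac' hφ.stronglyMeasurable enorm_lt_top).smul_measure hb)

lemma integral_withMissing (Q : Measure α) {φ : Option α → ℝ} (hφ : Measurable φ)
    (h : Integrable (fun z => φ (some z)) Q) {a b : ℝ≥0∞} (ha : a ≠ ∞) (hb : b ≠ ∞) :
    ∫ x, φ x ∂(withMissing Q a b) = a.toReal * ∫ z, φ (some z) ∂Q + b.toReal * φ none := by
  obtain ⟨h₁, h₂⟩ := integrable_add_measure.1 (integrable_withMissing Q hφ h ha hb)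
  rw [withMissing, integral_add_measure h₁ h₂, integral_smul_measure, integral_smul_measure,
    integral_map measurable_optionSome.aemeasurable hφ.aestronglyMeasurable,
    integral_dirac' _ _ hφ.stronglyMeasurable, smul_eq_mul, smul_eq_mul]

end Option

section KullbackLeibler

variable {α β : Type*} [MeasurableSpace α] [MeasurableSpace β]

lemma klDivR_eq_toReal_klDiv {μ ν : Measure α} [IsFiniteMeasure μ] [IsFiniteMeasure ν]
    (h : klDiv μ ν ≠ ∞) (h_univ : μ univ = ν univ) : klDivR μ ν = (klDiv μ ν).toReal :=
  (toReal_klDiv_of_measure_eq (klDiv_ne_top_iff.1 h).1 h_univ).symm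

lemma klDiv_of_eq_withDensity {μ ν : Measure α} [IsFiniteMeasure μ] [IsFiniteMeasure ν]
    {f : α → ℝ≥0∞} (hf : Measurable f) (hμν : μ = ν.withDensity f)
    (h_int : Integrable (fun x => Real.log (f x).toReal) μ) (h_univ : μ univ = ν univ) :
    klDiv μ ν = ENNReal.ofReal (∫ x, Real.log (f x).toReal ∂μ) := by
  have hac : μ ≪ ν := hμν ▸ withDensity_absolutelyContinuous ν f
  have hllr : llr μ ν =ᵐ[μ] fun x => Real.log (f x).toReal := by
    have h := Measure.rnDeriv_withDensity ν hf
    rw [← hμν] at h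
    filter_upwards [hac.ae_le h] with x hx
    simp only [llr_def, hx]
  rw [klDiv_of_ac_of_integrable hac (h_int.congr hllr.symm), integral_congr_ae hllr,
    measureReal_def, measureReal_def, h_univ, add_sub_cancel_right]

lemma klDiv_map_measurableEquiv {μ ν : Measure α} [IsFiniteMeasure μ] [IsFiniteMeasure ν]
    (e : α ≃ᵐ β) : klDiv (μ.map e) (ν.map e) = klDiv μ ν := by
  refine le_antisymm (klDiv_map_le μ ν e.measurable) ?_
  calc klDiv μ ν = klDiv ((μ.map e).map e.symm) ((ν.map e).map e.symm) := by
        rw [e.map_symm_map, e.map_symm_map]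
    _ ≤ klDiv (μ.map e) (ν.map e) := klDiv_map_le _ _ e.symm.measurable

lemma klDiv_prod_left (ρ : Measure α) [IsProbabilityMeasure ρ] {μ ν : Measure β}
    [IsFiniteMeasure μ] [IsFiniteMeasure ν] :
    klDiv (ρ.prod μ) (ρ.prod ν) = klDiv μ ν := by
  rw [← Measure.prod_swap (μ := μ), ← Measure.prod_swap (μ := ν),
    show (Prod.swap : β × α → α × β) = MeasurableEquiv.prodComm from rfl,
    klDiv_map_measurableEquiv, ← Measure.compProd_const, ← Measure.compProd_const,
    klDiv_compProd_left]

lemma klDiv_prod_eq_add {μ ν : Measure α} {μ' ν' : Measure β} [IsProbabilityMeasure μ]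
    [IsFiniteMeasure ν] [IsProbabilityMeasure μ'] [IsProbabilityMeasure ν'] :
    klDiv (μ.prod μ') (ν.prod ν') = klDiv μ ν + klDiv μ' ν' := by
  rw [← Measure.compProd_const, ← Measure.compProd_const, klDiv_compProd_eq_add,
    Measure.compProd_const, Measure.compProd_const, klDiv_prod_left]

lemma klDiv_pi {n : ℕ} {α : Fin n → Type*} [∀ i, MeasurableSpace (α i)]
    (μ ν : ∀ i, Measure (α i)) [∀ i, IsProbabilityMeasure (μ i)]
    [∀ i, IsProbabilityMeasure (ν i)] :
    klDiv (Measure.pi μ) (Measure.pi ν) = ∑ i, klDiv (μ i) (ν i) := by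
  induction n with
  | zero =>
    rw [Measure.pi_of_empty μ isEmptyElim, Measure.pi_of_empty ν isEmptyElim]
    simp
  | succ n ih =>
    rw [← klDiv_map_measurableEquiv (MeasurableEquiv.piFinSuccAbove α 0),
      (measurePreserving_piFinSuccAbove μ 0).map_eq,
      (measurePreserving_piFinSuccAbove ν 0).map_eq, klDiv_prod_eq_add, ih,
      Fin.sum_univ_succ]
    rfl

end KullbackLeibler

lemma exp_sub_exp_neg_le {u : ℝ} (hu0 : 0 ≤ u) (hu1 : u ≤ 1) :
    Real.exp u - Real.exp (-u) ≤ 2 * u + 2 * u ^ 3 / 5 := by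
  have hb1 := Real.exp_bound (x := u) (by rwa [abs_of_nonneg hu0]) (n := 5) (by norm_num)
  have hb2 := Real.exp_bound (x := -u) (by rwa [abs_neg, abs_of_nonneg hu0]) (n := 5)
    (by norm_num)
  rw [abs_of_nonneg hu0] at hb1
  rw [abs_neg, abs_of_nonneg hu0] at hb2
  simp only [Finset.sum_range_succ, Finset.sum_range_zero, Nat.factorial] at hb1 hb2
  norm_num at hb1 hb2
  nlinarith [(abs_le.1 hb1).2, (abs_le.1 hb2).1, pow_le_pow_of_le_one hu0 hu1 (by norm_num : 3 ≤ 5)]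

/-- `(e^ζ - 1)/ζ = e^{ζ/2} · sinh(ζ/2)/(ζ/2)`, and `sinh u / u ≤ 1 + u²/5` for `u ≤ 1`. -/
lemma log_exp_sub_one_div_sub_half_le {ζ : ℝ} (h0 : 0 < ζ) (h2 : ζ ≤ 2) :
    Real.log ((Real.exp ζ - 1) / ζ) - ζ / 2 ≤ ζ ^ 2 / 20 := by
  have hsinh := exp_sub_exp_neg_le (u := ζ / 2) (by linarith) (by linarith)
  have hmul : Real.exp (ζ / 2) * Real.exp (-(ζ / 2)) = 1 := by rw [← Real.exp_add]; simp
  have hsq : Real.exp (ζ / 2) * Real.exp (ζ / 2) = Real.exp ζ := by rw [← Real.exp_add]; ring_nf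
  have hbound : (Real.exp ζ - 1) / ζ ≤ Real.exp (ζ / 2) * (1 + ζ ^ 2 / 20) := by
    rw [div_le_iff₀ h0]
    nlinarith [mul_le_mul_of_nonneg_left hsinh (Real.exp_pos (ζ / 2)).le]
  have hpos : 0 < (Real.exp ζ - 1) / ζ := div_pos (by linarith [Real.add_one_lt_exp h0.ne']) h0
  have hlog := Real.log_le_log hpos hbound
  rw [Real.log_mul (Real.exp_ne_zero _) (by positivity), Real.log_exp] at hlog
  linarith [Real.log_le_sub_one_of_pos (x := 1 + ζ ^ 2 / 20) (by positivity)]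

lemma integral_exp_mul_of_ne_zero {ζ : ℝ} (hζ : ζ ≠ 0) :
    ∫ y in (0 : ℝ)..1, Real.exp (ζ * y) = (Real.exp ζ - 1) / ζ := by
  rw [intervalIntegral.integral_comp_mul_left Real.exp hζ, integral_exp, mul_zero, mul_one,
    Real.exp_zero, smul_eq_mul, inv_mul_eq_div]

lemma measurable_fdens (ζ : ℝ) : Measurable (fdens ζ) := by
  unfold fdens
  split_ifs
  · exact measurable_const.ite measurableSet_Icc measurable_const
  · exact (by fun_prop : Measurable fun y => ζ * Real.exp (ζ * y) / (Real.exp ζ - 1)).ite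
      measurableSet_Icc measurable_const

lemma fdens_zero_of_mem {y : ℝ} (hy : y ∈ Icc (0 : ℝ) 1) : fdens 0 y = 1 := by
  simp [fdens, hy]

lemma fdens_of_mem {ζ y : ℝ} (hζ : ζ ≠ 0) (hy : y ∈ Icc (0 : ℝ) 1) :
    fdens ζ y = ζ * Real.exp (ζ * y) / (Real.exp ζ - 1) := by
  simp [fdens, hy, hζ]

lemma lintegral_fdens {ζ : ℝ} (hζ : 0 ≤ ζ) :
    ∫⁻ y in Icc (0 : ℝ) 1, ENNReal.ofReal (fdens ζ y) = 1 := by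
  rcases hζ.eq_or_lt with rfl | hζ
  · rw [setLIntegral_congr_fun measurableSet_Icc fun y hy => by
      rw [fdens_zero_of_mem hy, ENNReal.ofReal_one]]
    simp
  have hexp : 0 < Real.exp ζ - 1 := by linarith [Real.add_one_lt_exp hζ.ne']
  rw [setLIntegral_congr_fun measurableSet_Icc fun y hy => by rw [fdens_of_mem hζ.ne' hy],
    ← ofReal_integral_eq_lintegral_ofReal (by fun_prop : Continuous fun y =>
      ζ * Real.exp (ζ * y) / (Real.exp ζ - 1)).integrableOn_Icc
      (ae_of_all _ fun y => by positivity),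
    integral_Icc_eq_integral_Ioc, ← intervalIntegral.integral_of_le zero_le_one,
    intervalIntegral.integral_div, intervalIntegral.integral_const_mul,
    integral_exp_mul_of_ne_zero hζ.ne', mul_div_cancel₀ _ hζ.ne', div_self hexp.ne',
    ENNReal.ofReal_one]

/-- The likelihood ratio `f₀ / f_ζ` on `[0,1]`. -/
noncomputable def densityRatio (ζ y : ℝ) : ℝ := (Real.exp ζ - 1) / ζ * Real.exp (-(ζ * y))

lemma densityRatio_pos {ζ : ℝ} (hζ : 0 < ζ) (y : ℝ) : 0 < densityRatio ζ y := by
  have : 0 < Real.exp ζ - 1 := by linarith [Real.add_one_lt_exp hζ.ne']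
  unfold densityRatio
  positivity

lemma measurable_densityRatio (ζ : ℝ) : Measurable (densityRatio ζ) := by
  unfold densityRatio
  fun_prop

lemma fdens_mul_densityRatio {ζ y : ℝ} (hζ : 0 < ζ) (hy : y ∈ Icc (0 : ℝ) 1) :
    fdens ζ y * densityRatio ζ y = 1 := by
  have : Real.exp ζ - 1 ≠ 0 := by linarith [Real.add_one_lt_exp hζ.ne']
  rw [fdens_of_mem hζ.ne' hy, densityRatio, Real.exp_neg]
  field_simp

lemma log_densityRatio {ζ : ℝ} (hζ : 0 < ζ) (y : ℝ) :
    Real.log (densityRatio ζ y) = Real.log ((Real.exp ζ - 1) / ζ) - ζ * y := by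
  have : 0 < Real.exp ζ - 1 := by linarith [Real.add_one_lt_exp hζ.ne']
  rw [densityRatio, Real.log_mul (by positivity) (Real.exp_ne_zero _), Real.log_exp]
  ring

lemma integral_log_densityRatio {ζ : ℝ} (hζ : 0 < ζ) :
    ∫ y in Icc (0 : ℝ) 1, Real.log (densityRatio ζ y)
      = Real.log ((Real.exp ζ - 1) / ζ) - ζ / 2 := by
  simp_rw [log_densityRatio hζ]
  rw [integral_Icc_eq_integral_Ioc, ← intervalIntegral.integral_of_le zero_le_one,
    intervalIntegral.integral_sub intervalIntegrable_const
      ((by fun_prop : Continuous fun y : ℝ => ζ * y).intervalIntegrable 0 1),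
    intervalIntegral.integral_const_mul, integral_id, intervalIntegral.integral_const,
    smul_eq_mul]
  ring

section Model

lemma measurableSet_Aset (d : ℕ) : MeasurableSet (Aset d) :=
  MeasurableSet.univ_pi fun _ => measurableSet_Icc

lemma Cd_nonneg (d : ℕ) : 0 ≤ Cd d := Real.sqrt_nonneg _

lemma Cd_succ (n : ℕ) : Cd (n + 1) = Real.sqrt 2 * Real.sqrt (2 * n) ^ n := by
  rw [Cd, Nat.add_sub_cancel, Nat.cast_add_one, add_sub_cancel_right,
    Real.sqrt_eq_iff_eq_sq (by positivity) (by positivity), mul_pow, ← pow_mul, mul_comm n,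
    pow_mul, Real.sq_sqrt (by positivity), Real.sq_sqrt (by positivity)]
  ring

variable {d : ℕ}

lemma Cd_mul_eq_one (hd : 0 < d) :
    Cd d * (Real.sqrt (2 * ((d : ℝ) - 1)))⁻¹ ^ (d - 1) * (Real.sqrt 2)⁻¹ = 1 := by
  obtain ⟨n, rfl⟩ := Nat.exists_eq_add_of_lt hd
  simp only [zero_add, Nat.cast_add, Nat.cast_one, add_sub_cancel_right, Nat.add_sub_cancel,
    Cd_succ]
  rcases n.eq_zero_or_pos with rfl | hn
  · simp
  · field_simp
    rw [← mul_pow, mul_one_div_cancel (by positivity), one_pow]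

noncomputable def scaledHead (hd : 0 < d) (z : Fin d → ℝ) : ℝ := Real.sqrt 2 * z ⟨0, hd⟩

variable (hd : 0 < d)

lemma measurable_scaledHead : Measurable (scaledHead hd) :=
  (measurable_pi_apply _).const_mul _

lemma scaledHead_mem_Icc {z : Fin d → ℝ} (hz : z ∈ Aset d) : scaledHead hd z ∈ Icc (0 : ℝ) 1 := by
  have h := hz ⟨0, hd⟩ (mem_univ _)
  simp only [if_pos] at h
  have hs : (0 : ℝ) < Real.sqrt 2 := by positivity
  refine ⟨mul_nonneg hs.le h.1, ?_⟩
  calc Real.sqrt 2 * z ⟨0, hd⟩ ≤ Real.sqrt 2 * (Real.sqrt 2)⁻¹ := by gcongr; exact h.2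
    _ = 1 := mul_inv_cancel₀ hs.ne'

lemma Qone_zero (ζ : ℝ) : Qone d hd ζ 0 = ENNReal.ofReal (Cd d) • volume.restrict (Aset d) := by
  rw [Qone, ← withDensity_const]
  refine withDensity_congr_ae (ae_restrict_of_forall_mem (measurableSet_Aset d) fun z hz => ?_)
  dsimp only
  rw [zero_mul, (fdens_zero_of_mem (scaledHead_mem_Icc hd hz) :
    fdens 0 (Real.sqrt 2 * z ⟨0, hd⟩) = 1), mul_one]

lemma map_scaledHead_Qone_zero (ζ : ℝ) :
    (Qone d hd ζ 0).map (scaledHead hd) = volume.restrict (Icc 0 1) := by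
  have hs : (0 : ℝ) < Real.sqrt 2 := by positivity
  have hY : scaledHead hd = (fun t => Real.sqrt 2 * t) ∘ fun z : Fin d → ℝ => z ⟨0, hd⟩ := rfl
  have hscale : (volume.restrict (Icc (0 : ℝ) (Real.sqrt 2)⁻¹)).map (fun t => Real.sqrt 2 * t)
      = ENNReal.ofReal (Real.sqrt 2)⁻¹ • volume.restrict (Icc 0 1) := by
    rw [show Icc (0 : ℝ) (Real.sqrt 2)⁻¹ = (fun t => Real.sqrt 2 * t) ⁻¹' Icc 0 1 by
        rw [preimage_const_mul_Icc₀ _ _ hs, zero_div, one_div],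
      ← Measure.restrict_map (measurable_const_mul _) measurableSet_Icc,
      Real.map_volume_mul_left hs.ne', abs_of_pos (inv_pos.2 hs), Measure.restrict_smul]
  have hprod : ∏ j ∈ Finset.univ.erase (⟨0, hd⟩ : Fin d), (volume.restrict (Icc (0 : ℝ)
      (if (j : ℕ) = 0 then (Real.sqrt 2)⁻¹ else (Real.sqrt (2 * ((d : ℝ) - 1)))⁻¹))) univ
      = ENNReal.ofReal (Real.sqrt (2 * ((d : ℝ) - 1)))⁻¹ ^ (d - 1) := by
    rw [Finset.prod_congr rfl fun j hj => by
      rw [if_neg (Fin.val_ne_iff.2 (Finset.ne_of_mem_erase hj)), Measure.restrict_apply_univ,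
        Real.volume_Icc, sub_zero], Finset.prod_const, Finset.card_erase_of_mem
        (Finset.mem_univ _), Finset.card_univ, Fintype.card_fin]
  rw [Qone_zero, Measure.map_smul, hY, ← Measure.map_map (measurable_const_mul (Real.sqrt 2))
    (measurable_pi_apply (⟨0, hd⟩ : Fin d)), Aset, volume_pi, Measure.restrict_pi_pi,
    Measure.pi_map_eval, Fin.val_mk, if_pos rfl, Measure.map_smul, hscale, smul_smul, smul_smul,
    hprod, ← ENNReal.ofReal_pow (by positivity), ← ENNReal.ofReal_mul (Cd_nonneg d),
    ← ENNReal.ofReal_mul (mul_nonneg (Cd_nonneg d) (by positivity)), Cd_mul_eq_one hd,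
    ENNReal.ofReal_one, one_smul]

lemma ae_scaledHead_mem_Icc (ζ : ℝ) : ∀ᵐ z ∂Qone d hd ζ 0, scaledHead hd z ∈ Icc (0 : ℝ) 1 := by
  refine ae_of_ae_map (measurable_scaledHead hd).aemeasurable ?_
  rw [map_scaledHead_Qone_zero]
  exact ae_restrict_mem measurableSet_Icc

lemma integrable_comp_scaledHead (ζ : ℝ) {φ : ℝ → ℝ} (hφ : Measurable φ)
    (h : IntegrableOn φ (Icc 0 1)) : Integrable (fun z => φ (scaledHead hd z)) (Qone d hd ζ 0) := by
  rw [IntegrableOn, ← map_scaledHead_Qone_zero hd ζ] at h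
  exact (integrable_map_measure hφ.aestronglyMeasurable
    (measurable_scaledHead hd).aemeasurable).1 h

lemma integral_comp_scaledHead (ζ : ℝ) {φ : ℝ → ℝ} (hφ : Measurable φ) :
    ∫ z, φ (scaledHead hd z) ∂Qone d hd ζ 0 = ∫ y in Icc 0 1, φ y := by
  rw [← map_scaledHead_Qone_zero hd ζ,
    integral_map (measurable_scaledHead hd).aemeasurable hφ.aestronglyMeasurable]

lemma Qone_eq_withDensity (ζ τ : ℝ) :
    Qone d hd ζ τ = (Qone d hd ζ 0).withDensity
      fun z => ENNReal.ofReal (fdens (τ * ζ) (scaledHead hd z)) := by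
  have hf : Measurable fun z => ENNReal.ofReal (fdens (τ * ζ) (scaledHead hd z)) :=
    ((measurable_fdens _).comp (measurable_scaledHead hd)).ennreal_ofReal
  rw [Qone_zero, ← withDensity_const, ← withDensity_mul _ measurable_const hf, Qone]
  congr 1
  funext z
  simp only [Pi.mul_apply, ENNReal.ofReal_mul (Cd_nonneg d), scaledHead]

lemma Qone_zero_eq_withDensity {ζ : ℝ} (hζ : 0 < ζ) :
    Qone d hd ζ 0 = (Qone d hd ζ 1).withDensity
      fun z => ENNReal.ofReal (densityRatio ζ (scaledHead hd z)) := by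
  have hf : Measurable fun z => ENNReal.ofReal (fdens (1 * ζ) (scaledHead hd z)) :=
    ((measurable_fdens _).comp (measurable_scaledHead hd)).ennreal_ofReal
  have hr : Measurable fun z => ENNReal.ofReal (densityRatio ζ (scaledHead hd z)) :=
    ((measurable_densityRatio ζ).comp (measurable_scaledHead hd)).ennreal_ofReal
  rw [Qone_eq_withDensity hd ζ 1, ← withDensity_mul _ hf hr]
  conv_lhs => rw [← withDensity_one (μ := Qone d hd ζ 0)]
  refine withDensity_congr_ae ?_
  filter_upwards [ae_scaledHead_mem_Icc hd ζ] with z hz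
  rw [Pi.mul_apply, one_mul, Pi.one_apply, ← ENNReal.ofReal_mul' (densityRatio_pos hζ _).le,
    fdens_mul_densityRatio hζ hz, ENNReal.ofReal_one]

lemma isProbabilityMeasure_Qone {ζ τ : ℝ} (h : 0 ≤ τ * ζ) :
    IsProbabilityMeasure (Qone d hd ζ τ) := by
  constructor
  rw [Qone_eq_withDensity, withDensity_apply _ MeasurableSet.univ, Measure.restrict_univ,
    ← lintegral_map (measurable_fdens _).ennreal_ofReal (measurable_scaledHead hd),
    map_scaledHead_Qone_zero, lintegral_fdens h]

lemma isProbabilityMeasure_Pzero (hd : 0 < d) : IsProbabilityMeasure (Pzero d) := by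
  have h : ENNReal.ofReal (Cd d) * volume (Aset d) = 1 := by
    simpa [Qone_zero, Measure.restrict_apply_univ] using
      (isProbabilityMeasure_Qone hd (ζ := 0) (τ := 0) (by simp)).measure_univ
  constructor
  rw [Pzero, Measure.smul_apply, Measure.restrict_apply_univ, smul_eq_mul,
    ENNReal.inv_mul_cancel (right_ne_zero_of_mul_eq_one h)
      fun htop => by
        rw [htop, ENNReal.mul_top (left_ne_zero_of_mul_eq_one h)] at h
        exact ENNReal.top_ne_one h]

lemma Pone_eq_withMissing (ζ w₁ τ : ℝ) :
    Pone d hd ζ w₁ τ = withMissing (Qone d hd ζ τ) (ENNReal.ofReal (1 - w₁)) (ENNReal.ofReal w₁) :=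
  rfl

lemma isProbabilityMeasure_Pone {ζ w₁ τ : ℝ} (h : 0 ≤ τ * ζ) (hw₁ : w₁ ∈ Icc (0 : ℝ) 1) :
    IsProbabilityMeasure (Pone d hd ζ w₁ τ) := by
  have := isProbabilityMeasure_Qone hd h
  have := Measure.isProbabilityMeasure_map (μ := Qone d hd ζ τ) measurable_optionSome.aemeasurable
  constructor
  rw [Pone, Measure.add_apply, Measure.smul_apply, Measure.smul_apply, measure_univ,
    measure_univ, smul_eq_mul, smul_eq_mul, mul_one, mul_one,
    ← ENNReal.ofReal_add (by linarith [hw₁.2]) hw₁.1, sub_add_cancel, ENNReal.ofReal_one]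

lemma klDiv_Pone_eq {ζ w₁ : ℝ} (hζ : 0 < ζ) (hw₁ : w₁ ∈ Icc (0 : ℝ) 1) :
    klDiv (Pone d hd ζ w₁ 0) (Pone d hd ζ w₁ 1)
      = ENNReal.ofReal ((1 - w₁) * (Real.log ((Real.exp ζ - 1) / ζ) - ζ / 2)) := by
  have := isProbabilityMeasure_Pone hd (τ := 0) (ζ := ζ) (by simp) hw₁
  have := isProbabilityMeasure_Pone hd (τ := 1) (by simpa using hζ.le) hw₁
  set r : (Fin d → ℝ) → ℝ≥0∞ := fun z => ENNReal.ofReal (densityRatio ζ (scaledHead hd z))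
  have hr : Measurable r :=
    ((measurable_densityRatio ζ).comp (measurable_scaledHead hd)).ennreal_ofReal
  have hdens : Pone d hd ζ w₁ 0 = (Pone d hd ζ w₁ 1).withDensity fun x => x.elim 1 r := by
    rw [Pone_eq_withMissing, Pone_eq_withMissing, withMissing_withDensity _ hr,
      ← Qone_zero_eq_withDensity hd hζ]
  set φ : Option (Fin d → ℝ) → ℝ := fun x => Real.log (x.elim 1 r).toReal
  have hφ : Measurable φ := (hr.option_elim 1).ennreal_toReal.log
  have hφ_some : (fun z => φ (some z)) = fun z => Real.log (densityRatio ζ (scaledHead hd z)) := by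
    funext z
    simp only [φ, r, Option.elim_some, ENNReal.toReal_ofReal (densityRatio_pos hζ _).le]
  have hint : Integrable (fun z => φ (some z)) (Qone d hd ζ 0) := by
    rw [hφ_some]
    refine integrable_comp_scaledHead hd ζ (φ := fun y => Real.log (densityRatio ζ y))
      (measurable_densityRatio ζ).log ?_
    simp_rw [log_densityRatio hζ]
    exact (by fun_prop : Continuous fun y => Real.log ((Real.exp ζ - 1) / ζ) - ζ * y)
      |>.integrableOn_Icc
  rw [klDiv_of_eq_withDensity (hr.option_elim 1) hdens
      (integrable_withMissing _ hφ hint ENNReal.ofReal_ne_top ENNReal.ofReal_ne_top)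
      (by rw [measure_univ, measure_univ]),
    Pone_eq_withMissing, integral_withMissing _ hφ hint ENNReal.ofReal_ne_top ENNReal.ofReal_ne_top,
    hφ_some, integral_comp_scaledHead hd ζ (φ := fun y => Real.log (densityRatio ζ y))
      (measurable_densityRatio ζ).log,
    integral_log_densityRatio hζ, ENNReal.toReal_ofReal (by linarith [hw₁.2]),
    ENNReal.toReal_ofReal hw₁.1]
  simp only [φ, Option.elim_none, ENNReal.toReal_one, Real.log_one, mul_zero, add_zero]

lemma klDiv_Pone_le {ζ w₁ : ℝ} (hζ : ζ ∈ Icc (0 : ℝ) 2) (hw₁ : w₁ ∈ Icc (0 : ℝ) 1) :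
    klDiv (Pone d hd ζ w₁ 0) (Pone d hd ζ w₁ 1) ≤ ENNReal.ofReal ((1 - w₁) * ζ ^ 2 / 20) := by
  rcases hζ.1.eq_or_lt with rfl | hζ0
  · have := isProbabilityMeasure_Pone hd (τ := 1) (ζ := 0) (by simp) hw₁
    rw [show Pone d hd 0 w₁ 0 = Pone d hd 0 w₁ 1 by simp [Pone, Qone], klDiv_self]
    exact bot_le
  rw [klDiv_Pone_eq hd hζ0 hw₁, mul_div_assoc]
  exact ENNReal.ofReal_le_ofReal (mul_le_mul_of_nonneg_left
    (log_exp_sub_one_div_sub_half_le hζ0 hζ.2) (by linarith [hw₁.2]))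

lemma isProbabilityMeasure_Pbar (n₀ n₁ : ℕ) {ζ w₁ τ : ℝ} (h : 0 ≤ τ * ζ)
    (hw₁ : w₁ ∈ Icc (0 : ℝ) 1) : IsProbabilityMeasure (Pbar d hd n₀ n₁ ζ w₁ τ) := by
  have := isProbabilityMeasure_Pone hd h hw₁
  have := isProbabilityMeasure_Pzero hd
  have := Measure.isProbabilityMeasure_map (μ := Pzero d) measurable_optionSome.aemeasurable
  unfold Pbar
  infer_instance

lemma klDiv_Pbar_eq (n₀ n₁ : ℕ) {ζ w₁ : ℝ} (hζ : 0 ≤ ζ) (hw₁ : w₁ ∈ Icc (0 : ℝ) 1) :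
    klDiv (Pbar d hd n₀ n₁ ζ w₁ 0) (Pbar d hd n₀ n₁ ζ w₁ 1)
      = n₁ * klDiv (Pone d hd ζ w₁ 0) (Pone d hd ζ w₁ 1) := by
  have := isProbabilityMeasure_Pone hd (τ := 0) (ζ := ζ) (by simp) hw₁
  have := isProbabilityMeasure_Pone hd (τ := 1) (by simpa using hζ) hw₁
  have := isProbabilityMeasure_Pzero hd
  have := Measure.isProbabilityMeasure_map (μ := Pzero d) measurable_optionSome.aemeasurable
  rw [Pbar, Pbar, klDiv_prod_left, klDiv_pi, Finset.sum_const, Finset.card_univ,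
    Fintype.card_fin, nsmul_eq_mul]

end Model

/-- **KL bound between the product measures of the lower-bound construction
(Lemma A.12):** for `ζ ∈ [0,2]`, `n₁ ∈ ℕ`, `w₁ ∈ [0,1]`,
`KL(P̄_{n₀,n₁}(ζ,w₁,0), P̄_{n₀,n₁}(ζ,w₁,1)) ≤ n₁(1−w₁)ζ²/20`. -/
theorem kl_product_measure_bound (d : ℕ) (hd : 0 < d) (n₀ n₁ : ℕ)
    (ζ : ℝ) (hζ : ζ ∈ Set.Icc (0 : ℝ) 2) (w₁ : ℝ) (hw₁ : w₁ ∈ Set.Icc (0 : ℝ) 1) :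
    klDivR (Pbar d hd n₀ n₁ ζ w₁ 0) (Pbar d hd n₀ n₁ ζ w₁ 1)
      ≤ (n₁ : ℝ) * (1 - w₁) * ζ ^ 2 / 20 := by
  have := isProbabilityMeasure_Pbar hd n₀ n₁ (τ := 0) (ζ := ζ) (by simp) hw₁
  have := isProbabilityMeasure_Pbar hd n₀ n₁ (τ := 1) (by simpa using hζ.1) hw₁
  have hone := klDiv_Pone_le hd hζ hw₁
  have hprod := klDiv_Pbar_eq hd n₀ n₁ hζ.1 hw₁
  have hfin : klDiv (Pbar d hd n₀ n₁ ζ w₁ 0) (Pbar d hd n₀ n₁ ζ w₁ 1) ≠ ∞ := by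
    rw [hprod]
    exact ENNReal.mul_ne_top (ENNReal.natCast_ne_top n₁)
      (ne_top_of_le_ne_top ENNReal.ofReal_ne_top hone)
  rw [klDivR_eq_toReal_klDiv hfin (by rw [measure_univ, measure_univ]), hprod,
    ENNReal.toReal_mul, ENNReal.toReal_natCast, mul_assoc, mul_div_assoc]
  exact mul_le_mul_of_nonneg_left (ENNReal.toReal_le_of_le_ofReal
    (by have := hw₁.2; positivity) hone) n₁.cast_nonneg
end
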